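/- arXiv:2412.19121 — 2 statements merged into one kernel-verified Lean document; each statement's English description precedes it below -/
import Mathlib

section
/- Let α ∈ (0, 1) and T > 0. There exists a constant c > 0 (depending only on d, T, α) such that for all 0 < s < t ≤ T and all x ∈ ℝ^d: |∇p_t(x) − ∇p_s(x)| ≤ c · (t − s)^(α/2) · (t^(−(1+α)/2) · p_{2t}(x) + s^(−(1+α)/2) · p_{2s}(x)). -/
open Real MeasureTheory

/-- The Gaussian heat kernel `p_t(x) = (4πt)^(-d/2) exp(-|x|²/(4t))`. -/
noncomputable def heatKernel (d : ℕ) (t : ℝ) (x : EuclideanSpace ℝ (Fin d)) : ℝ :=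
  (4 * Real.pi * t) ^ (-(d : ℝ) / 2) * Real.exp (-‖x‖ ^ 2 / (4 * t))

/-- The spatial gradient of the Gaussian heat kernel: `∇p_t(x) = -(x/(2t)) p_t(x)`. -/
noncomputable def heatKernelGrad (d : ℕ) (t : ℝ) (x : EuclideanSpace ℝ (Fin d)) :
    EuclideanSpace ℝ (Fin d) :=
  (-(heatKernel d t x) / (2 * t)) • x

/-! Writing `p_r(x) = 2^(d/2) p_{2r}(x) exp(-|x|²/(8r))`, the leftover Gaussian factor absorbs the
polynomial weights in `|x|²/r`: this gives `|∇p_r| ≲ r^(-1/2) p_{2r}` and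
`|∂_r ∇p_r| ≲ r^(-3/2) p_{2r}`, and for `r ≤ t ≤ 2r` also `p_{2r} ≤ 2^(d/2) p_{2t}`.
If `t ≤ 2s`, the mean value theorem bounds the difference by `(t - s) t^(-3/2) p_{2t}`, and
`(t - s)^(1 - α/2) ≤ t^(1 - α/2)` turns this into the claim. If `t > 2s`, both `s` and `t` are
at most `2(t - s)`, and the triangle inequality with `v^(-1/2) ≤ 2 (t - s)^(α/2) v^(-(1+α)/2)`
suffices. -/

lemma one_add_le_two_mul_exp_half (q : ℝ) : 1 + q ≤ 2 * exp (q / 2) := by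
  linarith [add_one_le_exp (q / 2)]

lemma one_add_mul_add_le_mul_exp_half {a q : ℝ} (ha : 0 ≤ a) (hq : 0 ≤ q) :
    (1 + q) * (a + q) ≤ (2 * a + 8) * exp (q / 2) := by
  have := quadratic_le_exp_of_nonneg (show 0 ≤ q / 2 by positivity)
  nlinarith

lemma le_sqrt_mul_one_add_sq_div {r : ℝ} (hr : 0 < r) (ρ : ℝ) :
    ρ ≤ √r * (1 + ρ ^ 2 / (4 * r)) := by
  have hsquare : √r * (1 + ρ ^ 2 / (4 * r)) - ρ = (ρ - 2 * √r) ^ 2 / (4 * √r) := by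
    field_simp
    linear_combination ρ ^ 2 * sq_sqrt hr.le
  rw [← sub_nonneg, hsquare]
  positivity

section

variable {d : ℕ}

lemma heatKernel_pos {t : ℝ} (ht : 0 < t) (x : EuclideanSpace ℝ (Fin d)) :
    0 < heatKernel d t x := by
  unfold heatKernel
  have : 0 < 4 * π * t := by positivity
  positivity

lemma heatKernel_le_rpow_mul {r t : ℝ} (hr : 0 < r) (hrt : r ≤ t)
    (x : EuclideanSpace ℝ (Fin d)) :
    heatKernel d r x ≤ (t / r) ^ ((d : ℝ) / 2) * heatKernel d t x := by
  have ht : 0 < t := hr.trans_le hrt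
  have hpre : (4 * π * r) ^ (-(d : ℝ) / 2)
      = (t / r) ^ ((d : ℝ) / 2) * (4 * π * t) ^ (-(d : ℝ) / 2) := by
    rw [neg_div, rpow_neg (by positivity), rpow_neg (by positivity), div_rpow ht.le hr.le,
      mul_rpow (by positivity) hr.le, mul_rpow (by positivity) ht.le]
    field_simp
  have hexp : exp (-‖x‖ ^ 2 / (4 * r)) ≤ exp (-‖x‖ ^ 2 / (4 * t)) := by
    rw [exp_le_exp, neg_div, neg_div, neg_le_neg_iff]
    gcongr
  unfold heatKernel
  rw [hpre, mul_assoc]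
  gcongr

lemma heatKernel_mul_exp_eq {r : ℝ} (hr : 0 < r) (x : EuclideanSpace ℝ (Fin d)) :
    heatKernel d r x * exp (‖x‖ ^ 2 / (4 * r) / 2)
      = 2 ^ ((d : ℝ) / 2) * heatKernel d (2 * r) x := by
  have hpre : (4 * π * r) ^ (-(d : ℝ) / 2)
      = 2 ^ ((d : ℝ) / 2) * (4 * π * (2 * r)) ^ (-(d : ℝ) / 2) := by
    rw [show 4 * π * (2 * r) = 2 * (4 * π * r) by ring, mul_rpow zero_le_two (by positivity),
      ← mul_assoc, ← rpow_add two_pos, neg_div, add_neg_cancel, rpow_zero, one_mul]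
  unfold heatKernel
  rw [hpre, mul_assoc, mul_assoc, ← exp_add]
  congr 3
  field_simp
  ring

lemma hasDerivAt_heatKernel (x : EuclideanSpace ℝ (Fin d)) {r : ℝ} (hr : 0 < r) :
    HasDerivAt (fun r => heatKernel d r x)
      (heatKernel d r x * (‖x‖ ^ 2 / (4 * r ^ 2) - d / (2 * r))) r := by
  have h4 : 0 < 4 * π * r := by positivity
  have hpow :=
    ((hasDerivAt_id r).const_mul (4 * π)).rpow_const (p := -(d : ℝ) / 2) (Or.inl h4.ne')
  have hexp := ((hasDerivAt_inv hr.ne').const_mul (-‖x‖ ^ 2 / 4)).exp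
  have hfun : (fun r => heatKernel d r x)
      = fun r => (4 * π * id r) ^ (-(d : ℝ) / 2) * exp (-‖x‖ ^ 2 / 4 * r⁻¹) := by
    funext r
    simp only [heatKernel, id, ← div_eq_mul_inv, div_div]
  rw [hfun]
  refine (hpow.mul hexp).congr_deriv ?_
  simp only [heatKernel, id, ← div_eq_mul_inv, div_div]
  rw [rpow_sub_one h4.ne']
  field_simp
  ring

lemma hasDerivAt_heatKernelGrad (x : EuclideanSpace ℝ (Fin d)) {r : ℝ} (hr : 0 < r) :
    HasDerivAt (fun r => heatKernelGrad d r x)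
      ((heatKernel d r x * (1 + d / 2 - ‖x‖ ^ 2 / (4 * r)) / (2 * r ^ 2)) • x) r := by
  have hcoeff := (hasDerivAt_heatKernel x hr).neg.div ((hasDerivAt_id r).const_mul 2)
    (by positivity)
  refine (hcoeff.smul_const x).congr_deriv ?_
  congr 1
  simp only [id, Pi.neg_apply]
  field_simp
  ring

lemma norm_mul_heatKernel_le {r g C : ℝ} (hr : 0 < r) (x : EuclideanSpace ℝ (Fin d))
    (hg : 0 ≤ g) (h : (1 + ‖x‖ ^ 2 / (4 * r)) * g ≤ C * exp (‖x‖ ^ 2 / (4 * r) / 2)) :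
    ‖x‖ * g * heatKernel d r x ≤ C * 2 ^ ((d : ℝ) / 2) * √r * heatKernel d (2 * r) x := by
  have hp := heatKernel_pos hr x
  calc ‖x‖ * g * heatKernel d r x
      ≤ √r * ((1 + ‖x‖ ^ 2 / (4 * r)) * g) * heatKernel d r x := by
        rw [← mul_assoc]
        gcongr
        exact le_sqrt_mul_one_add_sq_div hr _
    _ ≤ √r * (C * exp (‖x‖ ^ 2 / (4 * r) / 2)) * heatKernel d r x := by gcongr
    _ = C * 2 ^ ((d : ℝ) / 2) * √r * heatKernel d (2 * r) x := by
        linear_combination (C * √r) * heatKernel_mul_exp_eq hr x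

lemma norm_heatKernelGrad_le {r : ℝ} (hr : 0 < r) (x : EuclideanSpace ℝ (Fin d)) :
    ‖heatKernelGrad d r x‖ ≤ 2 ^ ((d : ℝ) / 2) / √r * heatKernel d (2 * r) x := by
  have hbound := norm_mul_heatKernel_le hr x zero_le_one
    (by simpa using one_add_le_two_mul_exp_half (‖x‖ ^ 2 / (4 * r)))
  have hsq := sq_sqrt hr.le
  rw [heatKernelGrad, norm_smul, norm_div, norm_neg, norm_of_nonneg (heatKernel_pos hr x).le,
    norm_of_nonneg (by positivity : (0 : ℝ) ≤ 2 * r)]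
  calc heatKernel d r x / (2 * r) * ‖x‖ = ‖x‖ * 1 * heatKernel d r x / (2 * r) := by ring
    _ ≤ 2 * 2 ^ ((d : ℝ) / 2) * √r * heatKernel d (2 * r) x / (2 * r) := by gcongr
    _ = 2 ^ ((d : ℝ) / 2) / √r * heatKernel d (2 * r) x := by
        field_simp
        rw [hsq]

lemma norm_deriv_heatKernelGrad_le {r : ℝ} (hr : 0 < r) (x : EuclideanSpace ℝ (Fin d)) :
    ‖(heatKernel d r x * (1 + d / 2 - ‖x‖ ^ 2 / (4 * r)) / (2 * r ^ 2)) • x‖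
      ≤ (d + 10) * 2 ^ ((d : ℝ) / 2) / (2 * (r * √r)) * heatKernel d (2 * r) x := by
  have hq : 0 ≤ ‖x‖ ^ 2 / (4 * r) := by positivity
  have hbound := norm_mul_heatKernel_le (g := 1 + d / 2 + ‖x‖ ^ 2 / (4 * r)) (C := d + 10) hr x
    (by positivity)
    (by linarith [one_add_mul_add_le_mul_exp_half (by positivity : (0 : ℝ) ≤ 1 + d / 2) hq])
  have hsq := sq_sqrt hr.le
  have hp := heatKernel_pos hr x
  have habs : |1 + d / 2 - ‖x‖ ^ 2 / (4 * r)| ≤ 1 + d / 2 + ‖x‖ ^ 2 / (4 * r) := by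
    rw [abs_le]; constructor <;> linarith [(by positivity : (0 : ℝ) ≤ d / 2)]
  rw [norm_smul, norm_div, norm_mul, norm_of_nonneg (heatKernel_pos hr x).le,
    norm_of_nonneg (by positivity : (0 : ℝ) ≤ 2 * r ^ 2), Real.norm_eq_abs]
  calc heatKernel d r x * |1 + d / 2 - ‖x‖ ^ 2 / (4 * r)| / (2 * r ^ 2) * ‖x‖
      = ‖x‖ * |1 + d / 2 - ‖x‖ ^ 2 / (4 * r)| * heatKernel d r x / (2 * r ^ 2) := by ring
    _ ≤ ‖x‖ * (1 + d / 2 + ‖x‖ ^ 2 / (4 * r)) * heatKernel d r x / (2 * r ^ 2) := by gcongr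
    _ ≤ (d + 10) * 2 ^ ((d : ℝ) / 2) * √r * heatKernel d (2 * r) x / (2 * r ^ 2) :=
        div_le_div_of_nonneg_right hbound (by positivity)
    _ = (d + 10) * 2 ^ ((d : ℝ) / 2) / (2 * (r * √r)) * heatKernel d (2 * r) x := by
        field_simp
        rw [hsq]

lemma heatKernel_two_mul_div_le {r t : ℝ} (hr : 0 < r) (hrt : r ≤ t) (htr : t ≤ 2 * r)
    (x : EuclideanSpace ℝ (Fin d)) :
    heatKernel d (2 * r) x / (r * √r)
      ≤ 3 * 2 ^ ((d : ℝ) / 2) * heatKernel d (2 * t) x / (t * √t) := by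
  have ht : 0 < t := hr.trans_le hrt
  have hp := heatKernel_pos (by positivity : 0 < 2 * t) x
  have hkernel : heatKernel d (2 * r) x ≤ 2 ^ ((d : ℝ) / 2) * heatKernel d (2 * t) x := by
    refine (heatKernel_le_rpow_mul (r := 2 * r) (t := 2 * t) (by positivity) (by linarith)
      x).trans ?_
    gcongr
    rw [mul_div_mul_left _ _ two_ne_zero, div_le_iff₀ hr]; linarith
  have hsqrt : √t ≤ √2 * √r := by rw [← sqrt_mul zero_le_two]; exact sqrt_le_sqrt htr
  have hsqrt2 : √2 * 2 ≤ 3 := by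
    nlinarith [sq_sqrt (zero_le_two : (0 : ℝ) ≤ 2), sqrt_nonneg 2]
  have hcube : t * √t ≤ 3 * (r * √r) := by
    calc t * √t ≤ (2 * r) * (√2 * √r) := by gcongr
      _ = (√2 * 2) * (r * √r) := by ring
      _ ≤ 3 * (r * √r) := by gcongr
  rw [div_le_div_iff₀ (by positivity) (by positivity)]
  calc heatKernel d (2 * r) x * (t * √t)
      ≤ (2 ^ ((d : ℝ) / 2) * heatKernel d (2 * t) x) * (3 * (r * √r)) := by
        gcongr
    _ = 3 * 2 ^ ((d : ℝ) / 2) * heatKernel d (2 * t) x * (r * √r) := by ring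

lemma norm_heatKernelGrad_sub_le_of_le_two_mul {s t : ℝ} (hs : 0 < s) (hst : s ≤ t)
    (hts : t ≤ 2 * s) (x : EuclideanSpace ℝ (Fin d)) :
    ‖heatKernelGrad d t x - heatKernelGrad d s x‖
      ≤ 3 * (d + 10) * 2 ^ d / 2 * ((t - s) / (t * √t)) * heatKernel d (2 * t) x := by
  have hderiv : ∀ r ∈ Set.Ico s t,
      ‖(heatKernel d r x * (1 + d / 2 - ‖x‖ ^ 2 / (4 * r)) / (2 * r ^ 2)) • x‖
        ≤ 3 * (d + 10) * 2 ^ d / 2 / (t * √t) * heatKernel d (2 * t) x := by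
    rintro r ⟨hsr, hrt⟩
    have hr : 0 < r := hs.trans_le hsr
    have hsq : (2 : ℝ) ^ ((d : ℝ) / 2) * 2 ^ ((d : ℝ) / 2) = 2 ^ d := by
      rw [← rpow_add two_pos, add_halves, rpow_natCast]
    calc _ ≤ (d + 10) * 2 ^ ((d : ℝ) / 2) / (2 * (r * √r)) * heatKernel d (2 * r) x :=
          norm_deriv_heatKernelGrad_le hr x
      _ = (d + 10) * 2 ^ ((d : ℝ) / 2) / 2 * (heatKernel d (2 * r) x / (r * √r)) := by
          field_simp
      _ ≤ (d + 10) * 2 ^ ((d : ℝ) / 2) / 2 *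
            (3 * 2 ^ ((d : ℝ) / 2) * heatKernel d (2 * t) x / (t * √t)) :=
          mul_le_mul_of_nonneg_left (heatKernel_two_mul_div_le hr hrt.le (by linarith) x)
            (by positivity)
      _ = 3 * (d + 10) * 2 ^ d / 2 / (t * √t) * heatKernel d (2 * t) x := by
          rw [← hsq]
          ring
  have hmvt := norm_image_sub_le_of_norm_deriv_le_segment'
    (fun r hr => (hasDerivAt_heatKernelGrad x (hs.trans_le hr.1)).hasDerivWithinAt) hderiv
    t (Set.right_mem_Icc.mpr hst)
  exact hmvt.trans_eq (by ring)

lemma div_mul_sqrt_le_rpow_mul {u v α : ℝ} (hα : α ≤ 2) (hu : 0 < u) (huv : u ≤ v) :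
    u / (v * √v) ≤ u ^ (α / 2) * v ^ (-(1 + α) / 2) := by
  have hv : 0 < v := hu.trans_le huv
  have hu_split : u = u ^ (α / 2) * u ^ (1 - α / 2) := by
    rw [← rpow_add hu, add_sub_cancel, rpow_one]
  have hv_split : v ^ (1 - α / 2) / (v * √v) = v ^ (-(1 + α) / 2) := by
    rw [sqrt_eq_rpow, ← rpow_one_add' hv.le (by norm_num), ← rpow_sub hv]
    ring_nf
  calc u / (v * √v) = u ^ (α / 2) * (u ^ (1 - α / 2) / (v * √v)) := by
        rw [← mul_div_assoc, ← hu_split]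
    _ ≤ u ^ (α / 2) * (v ^ (1 - α / 2) / (v * √v)) := by
        gcongr
        linarith
    _ = u ^ (α / 2) * v ^ (-(1 + α) / 2) := by rw [hv_split]

lemma one_div_sqrt_le_two_mul_rpow_mul {u v α : ℝ} (hα0 : 0 ≤ α) (hα2 : α ≤ 2) (hv : 0 < v)
    (hvu : v ≤ 2 * u) : 1 / √v ≤ 2 * u ^ (α / 2) * v ^ (-(1 + α) / 2) := by
  have hu : 0 ≤ u := by linarith
  have hsplit : 1 / √v = v ^ (α / 2) * v ^ (-(1 + α) / 2) := by
    rw [← rpow_add hv, show α / 2 + -(1 + α) / 2 = -(1 / 2) by ring, rpow_neg hv.le,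
      sqrt_eq_rpow, one_div]
  have hpow : v ^ (α / 2) ≤ 2 * u ^ (α / 2) :=
    calc v ^ (α / 2) ≤ (2 * u) ^ (α / 2) := by gcongr
      _ = 2 ^ (α / 2) * u ^ (α / 2) := mul_rpow zero_le_two hu
      _ ≤ 2 * u ^ (α / 2) := by
          gcongr
          exact rpow_le_self_of_one_le one_le_two (by linarith)
  rw [hsplit]
  gcongr

lemma norm_heatKernelGrad_sub_le_of_two_mul_le {α s t : ℝ} (hα0 : 0 ≤ α) (hα2 : α ≤ 2)
    (hs : 0 < s) (hst : 2 * s ≤ t) (x : EuclideanSpace ℝ (Fin d)) :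
    ‖heatKernelGrad d t x - heatKernelGrad d s x‖
      ≤ 2 * 2 ^ ((d : ℝ) / 2) * (t - s) ^ (α / 2) *
          (t ^ (-(1 + α) / 2) * heatKernel d (2 * t) x +
            s ^ (-(1 + α) / 2) * heatKernel d (2 * s) x) := by
  have ht : 0 < t := by linarith
  have hpt := heatKernel_pos (by positivity : 0 < 2 * t) x
  have hps := heatKernel_pos (by positivity : 0 < 2 * s) x
  calc ‖heatKernelGrad d t x - heatKernelGrad d s x‖
      ≤ ‖heatKernelGrad d t x‖ + ‖heatKernelGrad d s x‖ := norm_sub_le _ _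
    _ ≤ 2 ^ ((d : ℝ) / 2) * (1 / √t) * heatKernel d (2 * t) x
          + 2 ^ ((d : ℝ) / 2) * (1 / √s) * heatKernel d (2 * s) x := by
        simp only [mul_one_div]
        gcongr <;> exact norm_heatKernelGrad_le (by positivity) x
    _ ≤ 2 ^ ((d : ℝ) / 2) * (2 * (t - s) ^ (α / 2) * t ^ (-(1 + α) / 2))
            * heatKernel d (2 * t) x
          + 2 ^ ((d : ℝ) / 2) * (2 * (t - s) ^ (α / 2) * s ^ (-(1 + α) / 2))
            * heatKernel d (2 * s) x := by
        gcongr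
        · exact one_div_sqrt_le_two_mul_rpow_mul hα0 hα2 ht (by linarith)
        · exact one_div_sqrt_le_two_mul_rpow_mul hα0 hα2 hs (by linarith)
    _ = _ := by ring

theorem norm_heatKernelGrad_sub_le {α s t : ℝ} (hα0 : 0 ≤ α) (hα2 : α ≤ 2) (hs : 0 < s)
    (hst : s < t) (x : EuclideanSpace ℝ (Fin d)) :
    ‖heatKernelGrad d t x - heatKernelGrad d s x‖
      ≤ (d + 10) * 2 ^ (d + 1) * (t - s) ^ (α / 2) *
          (t ^ (-(1 + α) / 2) * heatKernel d (2 * t) x +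
            s ^ (-(1 + α) / 2) * heatKernel d (2 * s) x) := by
  have ht : 0 < t := hs.trans hst
  have hpt := heatKernel_pos (by positivity : 0 < 2 * t) x
  have hps := heatKernel_pos (by positivity : 0 < 2 * s) x
  rcases le_or_gt t (2 * s) with hts | hts
  · calc _ ≤ 3 * (d + 10) * 2 ^ d / 2 * ((t - s) / (t * √t)) * heatKernel d (2 * t) x :=
          norm_heatKernelGrad_sub_le_of_le_two_mul hs hst.le hts x
      _ ≤ 3 * (d + 10) * 2 ^ d / 2 * ((t - s) ^ (α / 2) * t ^ (-(1 + α) / 2))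
            * heatKernel d (2 * t) x := by
          gcongr
          exact div_mul_sqrt_le_rpow_mul hα2 (by linarith) (by linarith)
      _ = 3 / 4 * ((d + 10) * 2 ^ (d + 1) * (t - s) ^ (α / 2) *
            (t ^ (-(1 + α) / 2) * heatKernel d (2 * t) x)) := by ring
      _ ≤ (d + 10) * 2 ^ (d + 1) * (t - s) ^ (α / 2) *
            (t ^ (-(1 + α) / 2) * heatKernel d (2 * t) x) := by
          linarith [(by positivity : 0 ≤ (d + 10) * 2 ^ (d + 1) * (t - s) ^ (α / 2) *
            (t ^ (-(1 + α) / 2) * heatKernel d (2 * t) x))]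
      _ ≤ _ := mul_le_mul_of_nonneg_left (le_add_of_nonneg_right (by positivity)) (by positivity)
  · have hd : (0 : ℝ) ≤ d := d.cast_nonneg
    refine (norm_heatKernelGrad_sub_le_of_two_mul_le hα0 hα2 hs hts.le x).trans ?_
    gcongr
    · linarith
    · rw [← rpow_natCast]
      exact rpow_le_rpow_of_exponent_le one_le_two (by push_cast; linarith)

end

theorem stmt_8_general (d : ℕ) (α T : ℝ) (hα0 : 0 < α) (hα1 : α < 1) :
    ∃ c : ℝ, 0 < c ∧ ∀ s t : ℝ, 0 < s → s < t → t ≤ T → ∀ x : EuclideanSpace ℝ (Fin d),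
      ‖heatKernelGrad d t x - heatKernelGrad d s x‖ ≤
        c * (t - s) ^ (α / 2) *
          (t ^ (-(1 + α) / 2) * heatKernel d (2 * t) x +
            s ^ (-(1 + α) / 2) * heatKernel d (2 * s) x) :=
  ⟨(d + 10) * 2 ^ (d + 1), by positivity, fun _ _ hs hst _ x =>
    norm_heatKernelGrad_sub_le hα0.le (by linarith) hs hst x⟩

theorem stmt_8 (d : ℕ) (α T : ℝ) (hα0 : 0 < α) (hα1 : α < 1) (hT : 0 < T) :
    ∃ c : ℝ, 0 < c ∧ ∀ s t : ℝ, 0 < s → s < t → t ≤ T → ∀ x : EuclideanSpace ℝ (Fin d),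
      ‖heatKernelGrad d t x - heatKernelGrad d s x‖ ≤
        c * (t - s) ^ (α / 2) *
          (t ^ (-(1 + α) / 2) * heatKernel d (2 * t) x +
            s ^ (-(1 + α) / 2) * heatKernel d (2 * s) x) :=
  stmt_8_general d α T hα0 hα1
end

section
/- Let ε ∈ (0, T], let X be an ℝ^d-valued random variable whose law has density ℓ with respect to Lebesgue measure, let Z be an ℝ^d-valued Gaussian random variable with mean 0 and covariance matrix 2ε·I_d, independent of X, and let h : ℝ^d → ℝ^d be Borel measurable with sup_x |h(x)| ≤ C·ε. Set Y := X + h(X) + Z. Then there exists a constant c ≥ 1 (depending only on d, T, C) such that for every nonnegative Borel measurable φ : ℝ^d × ℝ^d → [0, ∞]: E[φ(X, Y)] ≤ c · ∫∫_{ℝ^d × ℝ^d} φ(x, y) · ℓ(x) · p_{2ε}(x − y) dx dy. -/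
/-!
Conditionally on `X = x`, the variable `Y` is Gaussian with covariance `2εI` centred at
`x + h(x)`, so the law of `(X, Y)` has density `ℓ(x) p_ε(y - x - h(x))`. Since `|h(x)| ≤ Cε`,
the elementary bound `|u|² ≤ 2|u - v|² + 2|v|²` trades the shift `h(x)` for a doubling of the
variance at the cost of the factor `2^{d/2} exp(|v|²/(4ε)) ≤ 2^{d/2} exp(C²T/4)`.
-/

open MeasureTheory ProbabilityTheory Real ENNReal

@[fun_prop]
lemma measurable_heatKernel (d : ℕ) (t : ℝ) : Measurable (heatKernel d t) := by
  unfold heatKernel; fun_prop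

lemma heatKernel_nonneg (d : ℕ) {t : ℝ} (ht : 0 ≤ t) (x : EuclideanSpace ℝ (Fin d)) :
    0 ≤ heatKernel d t x := by
  unfold heatKernel; positivity

lemma heatKernel_sub_comm (d : ℕ) (t : ℝ) (x y : EuclideanSpace ℝ (Fin d)) :
    heatKernel d t (x - y) = heatKernel d t (y - x) := by
  rw [heatKernel, heatKernel, norm_sub_rev]

lemma exp_neg_norm_sub_sq_le {E : Type*} [SeminormedAddCommGroup E] {t : ℝ} (ht : 0 < t)
    (u v : E) :
    exp (-‖u - v‖ ^ 2 / (4 * t)) ≤ exp (‖v‖ ^ 2 / (4 * t)) * exp (-‖u‖ ^ 2 / (4 * (2 * t))) := by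
  rw [← exp_add, exp_le_exp]
  have hu : ‖u‖ ^ 2 ≤ 2 * (‖u - v‖ ^ 2 + ‖v‖ ^ 2) :=
    (pow_le_pow_left₀ (norm_nonneg u) (norm_le_norm_sub_add u v) 2).trans add_sq_le
  have hdiff : ‖v‖ ^ 2 / (4 * t) + -‖u‖ ^ 2 / (4 * (2 * t)) - -‖u - v‖ ^ 2 / (4 * t) =
      (2 * (‖u - v‖ ^ 2 + ‖v‖ ^ 2) - ‖u‖ ^ 2) / (8 * t) := by
    field_simp; ring
  have : 0 ≤ (2 * (‖u - v‖ ^ 2 + ‖v‖ ^ 2) - ‖u‖ ^ 2) / (8 * t) :=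
    div_nonneg (by linarith) (by positivity)
  linarith

lemma heatKernel_sub_le (d : ℕ) {t : ℝ} (ht : 0 < t) (u v : EuclideanSpace ℝ (Fin d)) :
    heatKernel d t (u - v) ≤ 2 ^ ((d : ℝ) / 2) * exp (‖v‖ ^ 2 / (4 * t)) * heatKernel d (2 * t) u := by
  have hprefactor : (4 * π * t) ^ (-(d : ℝ) / 2) =
      2 ^ ((d : ℝ) / 2) * (4 * π * (2 * t)) ^ (-(d : ℝ) / 2) := by
    rw [show 4 * π * (2 * t) = 2 * (4 * π * t) by ring,
      Real.mul_rpow (x := 2) (by norm_num) (by positivity), ← mul_assoc,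
      ← Real.rpow_add (by norm_num), show (d : ℝ) / 2 + -(d : ℝ) / 2 = 0 by ring, Real.rpow_zero,
      one_mul]
  unfold heatKernel
  rw [hprefactor]
  calc 2 ^ ((d : ℝ) / 2) * (4 * π * (2 * t)) ^ (-(d : ℝ) / 2) * exp (-‖u - v‖ ^ 2 / (4 * t))
      ≤ 2 ^ ((d : ℝ) / 2) * (4 * π * (2 * t)) ^ (-(d : ℝ) / 2) *
          (exp (‖v‖ ^ 2 / (4 * t)) * exp (-‖u‖ ^ 2 / (4 * (2 * t)))) := by
        gcongr; exact exp_neg_norm_sub_sq_le ht u v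
    _ = _ := by ring

lemma heatKernel_sub_le_of_norm_le (d : ℕ) {C T ε : ℝ} (hε : 0 < ε) (hεT : ε ≤ T)
    (u : EuclideanSpace ℝ (Fin d)) {v : EuclideanSpace ℝ (Fin d)} (hv : ‖v‖ ≤ C * ε) :
    heatKernel d ε (u - v) ≤ 2 ^ ((d : ℝ) / 2) * exp (C ^ 2 * T / 4) * heatKernel d (2 * ε) u := by
  have hshift : ‖v‖ ^ 2 / (4 * ε) ≤ C ^ 2 * T / 4 := by
    rw [div_le_iff₀ (by positivity)]
    nlinarith [pow_le_pow_left₀ (norm_nonneg _) hv 2,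
      mul_le_mul_of_nonneg_left hεT (by positivity : 0 ≤ C ^ 2 * ε)]
  calc heatKernel d ε (u - v)
      ≤ 2 ^ ((d : ℝ) / 2) * exp (‖v‖ ^ 2 / (4 * ε)) * heatKernel d (2 * ε) u :=
        heatKernel_sub_le d hε u v
    _ ≤ _ := by
        gcongr
        exact heatKernel_nonneg d (by positivity) u

lemma lintegral_comp_eq_of_indepFun {Ω α β : Type*} [MeasurableSpace Ω] [MeasurableSpace α]
    [MeasurableSpace β] {P : Measure Ω} [IsFiniteMeasure P] {X : Ω → α} {Z : Ω → β}
    (hX : Measurable X) (hZ : Measurable Z) (hXZ : IndepFun X Z P) {f : α → β → ℝ≥0∞}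
    (hf : Measurable (Function.uncurry f)) :
    ∫⁻ ω, f (X ω) (Z ω) ∂P = ∫⁻ x, ∫⁻ z, f x z ∂(P.map Z) ∂(P.map X) := by
  have h := lintegral_map (μ := P) hf (hX.prodMk hZ)
  rw [hXZ.map_prod_eq_prod_map_map hX.aemeasurable hZ.aemeasurable,
    lintegral_prod _ hf.aemeasurable] at h
  exact h.symm

lemma lintegral_add_left_withDensity {G : Type*} [MeasurableSpace G] [AddCommGroup G]
    [MeasurableAdd G] {μ : Measure G} [μ.IsAddLeftInvariant] {q g : G → ℝ≥0∞}
    (hq : Measurable q) (hg : Measurable g) (a : G) :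
    ∫⁻ z, g (a + z) ∂(μ.withDensity q) = ∫⁻ y, q (y - a) * g y ∂μ := by
  rw [lintegral_withDensity_eq_lintegral_mul _ hq (by fun_prop : Measurable fun z => g (a + z)),
    ← lintegral_add_left_eq_self (fun y => q (y - a) * g y) a]
  simp [add_sub_cancel_left]

theorem stmt_10_general (d : ℕ) {Ω : Type*} [MeasurableSpace Ω] (P : Measure Ω)
    [IsProbabilityMeasure P] (T C : ℝ) (hT : 0 < T) :
    ∃ c : ℝ, 1 ≤ c ∧
      ∀ (ε : ℝ), 0 < ε → ε ≤ T →
      ∀ (X Z : Ω → EuclideanSpace ℝ (Fin d)), Measurable X → Measurable Z →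
      ∀ ℓ : EuclideanSpace ℝ (Fin d) → ℝ, Measurable ℓ → (∀ x, 0 ≤ ℓ x) →
      -- the law of `X` has density `ℓ` w.r.t. Lebesgue measure:
      P.map X = volume.withDensity (fun x => ENNReal.ofReal (ℓ x)) →
      -- `Z` is Gaussian with mean `0` and covariance matrix `2ε I_d`,
      -- i.e. its law has density `p_ε` w.r.t. Lebesgue measure:
      P.map Z = volume.withDensity (fun z => ENNReal.ofReal (heatKernel d ε z)) →
      IndepFun X Z P →
      ∀ h : EuclideanSpace ℝ (Fin d) → EuclideanSpace ℝ (Fin d), Measurable h →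
      (∀ x, ‖h x‖ ≤ C * ε) →
      ∀ φ : EuclideanSpace ℝ (Fin d) × EuclideanSpace ℝ (Fin d) → ℝ≥0∞, Measurable φ →
        ∫⁻ ω, φ (X ω, X ω + h (X ω) + Z ω) ∂P ≤
          ENNReal.ofReal c *
            ∫⁻ x : EuclideanSpace ℝ (Fin d), ∫⁻ y : EuclideanSpace ℝ (Fin d),
              φ (x, y) * ENNReal.ofReal (ℓ x) *
                ENNReal.ofReal (heatKernel d (2 * ε) (x - y)) := by
  set c : ℝ := 2 ^ ((d : ℝ) / 2) * exp (C ^ 2 * T / 4)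
  refine ⟨c, one_le_mul_of_one_le_of_one_le (one_le_rpow (by norm_num) (by positivity))
    (one_le_exp (by positivity)), ?_⟩
  intro ε hε hεT X Z hX hZ ℓ hℓ _ hlawX hlawZ hXZ h hh hhC φ hφ
  calc ∫⁻ ω, φ (X ω, X ω + h (X ω) + Z ω) ∂P
      = ∫⁻ x, (∫⁻ y, ENNReal.ofReal (heatKernel d ε (y - (x + h x))) * φ (x, y)) ∂(P.map X) := by
        refine (lintegral_comp_eq_of_indepFun hX hZ hXZ (f := fun x z => φ (x, x + h x + z))
          (hφ.comp (by fun_prop))).trans ?_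
        refine lintegral_congr fun x => ?_
        rw [hlawZ]
        exact lintegral_add_left_withDensity (measurable_heatKernel d ε).ennreal_ofReal
          (g := fun y => φ (x, y)) (by fun_prop) (x + h x)
    _ ≤ ∫⁻ x, (∫⁻ y, ENNReal.ofReal c * ENNReal.ofReal (heatKernel d (2 * ε) (x - y)) * φ (x, y))
          ∂(P.map X) := by
        gcongr with x y
        rw [← ENNReal.ofReal_mul (by positivity), heatKernel_sub_comm d _ x, ← sub_sub]
        exact ENNReal.ofReal_le_ofReal (heatKernel_sub_le_of_norm_le d hε hεT _ (hhC x))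
    _ = ENNReal.ofReal c * ∫⁻ x, ∫⁻ y, φ (x, y) * ENNReal.ofReal (ℓ x) *
          ENNReal.ofReal (heatKernel d (2 * ε) (x - y)) := by
        rw [hlawX, lintegral_withDensity_eq_lintegral_mul _ hℓ.ennreal_ofReal
          (Measurable.lintegral_prod_right (by fun_prop)), ← lintegral_const_mul' _ _ ofReal_ne_top]
        refine lintegral_congr fun x => ?_
        rw [Pi.mul_apply, ← lintegral_const_mul' _ _ ofReal_ne_top,
          ← lintegral_const_mul' _ _ ofReal_ne_top]
        exact lintegral_congr fun y => by ring

theorem stmt_10 (d : ℕ) {Ω : Type*} [MeasurableSpace Ω] (P : Measure Ω)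
    [IsProbabilityMeasure P] (T C : ℝ) (hT : 0 < T) (hC : 0 < C) :
    ∃ c : ℝ, 1 ≤ c ∧
      ∀ (ε : ℝ), 0 < ε → ε ≤ T →
      ∀ (X Z : Ω → EuclideanSpace ℝ (Fin d)), Measurable X → Measurable Z →
      ∀ ℓ : EuclideanSpace ℝ (Fin d) → ℝ, Measurable ℓ → (∀ x, 0 ≤ ℓ x) →
      -- the law of `X` has density `ℓ` w.r.t. Lebesgue measure:
      P.map X = volume.withDensity (fun x => ENNReal.ofReal (ℓ x)) →
      -- `Z` is Gaussian with mean `0` and covariance matrix `2ε I_d`,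
      -- i.e. its law has density `p_ε` w.r.t. Lebesgue measure:
      P.map Z = volume.withDensity (fun z => ENNReal.ofReal (heatKernel d ε z)) →
      IndepFun X Z P →
      ∀ h : EuclideanSpace ℝ (Fin d) → EuclideanSpace ℝ (Fin d), Measurable h →
      (∀ x, ‖h x‖ ≤ C * ε) →
      ∀ φ : EuclideanSpace ℝ (Fin d) × EuclideanSpace ℝ (Fin d) → ℝ≥0∞, Measurable φ →
        ∫⁻ ω, φ (X ω, X ω + h (X ω) + Z ω) ∂P ≤
          ENNReal.ofReal c *
            ∫⁻ x : EuclideanSpace ℝ (Fin d), ∫⁻ y : EuclideanSpace ℝ (Fin d),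
              φ (x, y) * ENNReal.ofReal (ℓ x) *
                ENNReal.ofReal (heatKernel d (2 * ε) (x - y)) :=
  stmt_10_general d P T C hT
end
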